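/- arXiv:2312.15474 — 4 statements merged into one kernel-verified Lean document; each statement's English description precedes it below -/
import Mathlib

section
/- For any function f : S → ℝ, any policy π, and any transition kernel P, the discounted return satisfies J^π_P = E_{s∼ρ₀}[f(s)] + (1/(1−γ)) · E_{s∼d^π_P, a∼π(·|s), s'∼P(·|s,a)}[r(s,a,s') + γ f(s') − f(s)]. -/
open scoped BigOperators

section MDP

variable {S A : Type*} [Fintype S] [Fintype A] [DecidableEq S]

/-- One-step state distribution update under kernel `P` and policy `π`. -/
noncomputable def stepDist (P : S → A → S → ℝ) (π : S → A → ℝ) (ρ : S → ℝ) : S → ℝ :=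
  fun s => ∑ s' : S, ∑ a : A, ρ s' * π s' a * P s' a s

/-- Distribution of the state at time `t`. -/
noncomputable def stateDist (P : S → A → S → ℝ) (π : S → A → ℝ) (ρ₀ : S → ℝ) : ℕ → S → ℝ
  | 0 => ρ₀
  | t + 1 => stepDist P π (stateDist P π ρ₀ t)

/-- Discounted state visitation distribution `d^π_P`. -/
noncomputable def visitS (γ : ℝ) (P : S → A → S → ℝ) (π : S → A → ℝ) (ρ₀ : S → ℝ) : S → ℝ :=
  fun s => (1 - γ) * ∑' t : ℕ, γ ^ t * stateDist P π ρ₀ t s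

/-- Discounted state-action visitation distribution `μ^π_P`. -/
noncomputable def visitSA (γ : ℝ) (P : S → A → S → ℝ) (π : S → A → ℝ) (ρ₀ : S → ℝ) :
    S × A → ℝ :=
  fun x => (1 - γ) * ∑' t : ℕ, γ ^ t * stateDist P π ρ₀ t x.1 * π x.1 x.2

/-- Discounted transition (state-action-next-state) visitation distribution `ν^π_P`. -/
noncomputable def visitT (γ : ℝ) (P : S → A → S → ℝ) (π : S → A → ℝ) (ρ₀ : S → ℝ) :
    S × A × S → ℝ :=
  fun x => (1 - γ) * ∑' t : ℕ, γ ^ t * stateDist P π ρ₀ t x.1 * π x.1 x.2.1 * P x.1 x.2.1 x.2.2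

/-- Expected discounted return starting from initial distribution `ρ₀`. -/
noncomputable def ret (γ : ℝ) (r : S → A → S → ℝ) (P : S → A → S → ℝ) (π : S → A → ℝ)
    (ρ₀ : S → ℝ) : ℝ :=
  ∑' t : ℕ, γ ^ t *
    ∑ s : S, ∑ a : A, ∑ s' : S, stateDist P π ρ₀ t s * π s a * P s a s' * r s a s'

/-- Value function `V^π_P`. -/
noncomputable def valueFn (γ : ℝ) (r : S → A → S → ℝ) (P : S → A → S → ℝ) (π : S → A → ℝ) :
    S → ℝ :=
  fun s => ret γ r P π (fun s'' => if s'' = s then 1 else 0)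

/-- Expected discounted return `J^π_P = E_{ρ₀}[V^π_P]`. -/
noncomputable def expRet (γ : ℝ) (r : S → A → S → ℝ) (P : S → A → S → ℝ) (π : S → A → ℝ)
    (ρ₀ : S → ℝ) : ℝ :=
  ∑ s : S, ρ₀ s * valueFn γ r P π s

/-- Total variation distance `(1/2) ∑ |p - q|`. -/
noncomputable def tvDist {X : Type*} [Fintype X] (p q : X → ℝ) : ℝ :=
  (1 / 2) * ∑ x : X, |p x - q x|

/-- Kullback–Leibler divergence on a finite set. -/
noncomputable def klDiv' {X : Type*} [Fintype X] (p q : X → ℝ) : ℝ :=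
  ∑ x : X, p x * Real.log (p x / q x)

/-- Jensen–Shannon divergence on a finite set. -/
noncomputable def jsDiv {X : Type*} [Fintype X] (p q : X → ℝ) : ℝ :=
  (1 / 2) * klDiv' p (fun x => (p x + q x) / 2) +
    (1 / 2) * klDiv' q (fun x => (p x + q x) / 2)

/-- `π` is a stochastic policy. -/
def IsStochPol (π : S → A → ℝ) : Prop :=
  ∀ s, (∀ a, 0 ≤ π s a) ∧ ∑ a : A, π s a = 1

/-- `P` is a stochastic transition kernel. -/
def IsStochKer (P : S → A → S → ℝ) : Prop :=
  ∀ s a, (∀ s', 0 ≤ P s a s') ∧ ∑ s' : S, P s a s' = 1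

/-- `p` is a probability mass function. -/
def IsProb {X : Type*} [Fintype X] (p : X → ℝ) : Prop :=
  (∀ x, 0 ≤ p x) ∧ ∑ x : X, p x = 1

end MDP

/-! Write `M` for the row-stochastic state-to-state matrix of `P` under `π`, so that the state
distribution at time `t` is `ρ₀ ᵥ* M ^ t`. Both sides are then discounted series over time: the
return is `∑ γ ^ t ⟨ρ₀ M ^ t, r^π⟩`, with `r^π s` the expected one-step reward, and under `d^π_P`
the shaping term `γ f s' - f s` contributes `∑ γ ^ t (γ ⟨ρ₀ M ^ (t + 1), f⟩ - ⟨ρ₀ M ^ t, f⟩)`,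
which telescopes to `-⟨ρ₀, f⟩`. The entries of `M ^ t` lie in `[0, 1]`, so all series converge
and may be exchanged with the finite sums. -/

open Matrix

theorem hasSum_pow_mul_telescope {γ : ℝ} {e : ℕ → ℝ} (he : Summable fun t => γ ^ t * e t) :
    HasSum (fun t => γ ^ t * (γ * e (t + 1) - e t)) (-e 0) := by
  have h := ((summable_nat_add_iff 1).2 he).hasSum.sub he.hasSum
  rw [he.tsum_eq_zero_add, pow_zero, one_mul, sub_add_cancel_right] at h
  exact h.congr_fun fun t => by ring

theorem Matrix.summable_geometric_mul_pow_apply_of_mem_rowStochastic {n : Type*} [Fintype n]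
    [DecidableEq n] {M : Matrix n n ℝ} (hM : M ∈ rowStochastic ℝ n) {γ : ℝ} (hγ0 : 0 ≤ γ)
    (hγ1 : γ < 1) (i j : n) : Summable fun t => γ ^ t * (M ^ t) i j :=
  (summable_geometric_of_lt_one hγ0 hγ1).of_nonneg_of_le
    (fun t => mul_nonneg (pow_nonneg hγ0 t) (nonneg_of_mem_rowStochastic (pow_mem hM t)))
    (fun t => mul_le_of_le_one_right (pow_nonneg hγ0 t) (le_one_of_mem_rowStochastic (pow_mem hM t)))

namespace MDP

variable {S A : Type*} [Fintype S] [Fintype A]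

noncomputable def transMat (P : S → A → S → ℝ) (π : S → A → ℝ) : Matrix S S ℝ :=
  fun s s' => ∑ a, π s a * P s a s'

noncomputable def stepMean (P : S → A → S → ℝ) (π : S → A → ℝ) (h : S → A → S → ℝ) : S → ℝ :=
  fun s => ∑ a, ∑ s', π s a * P s a s' * h s a s'

theorem transMat_mem_rowStochastic [DecidableEq S] {P : S → A → S → ℝ} {π : S → A → ℝ}
    (hπ : IsStochPol π) (hP : IsStochKer P) : transMat P π ∈ rowStochastic ℝ S := by
  refine mem_rowStochastic_iff_sum.2 ⟨fun s s' => ?_, fun s => ?_⟩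
  · exact Finset.sum_nonneg fun a _ => mul_nonneg ((hπ s).1 a) ((hP s a).1 s')
  · simp only [transMat]
    rw [Finset.sum_comm]
    simp only [← Finset.mul_sum, (hP s _).2, mul_one, (hπ s).2]

theorem stateDist_succ (P : S → A → S → ℝ) (π : S → A → ℝ) (ρ : S → ℝ) (t : ℕ) :
    stateDist P π ρ (t + 1) = stateDist P π ρ t ᵥ* transMat P π := by
  ext s
  simp only [stateDist, stepDist, vecMul, dotProduct, transMat, Finset.mul_sum, mul_assoc]

theorem stateDist_eq_vecMul_pow [DecidableEq S] (P : S → A → S → ℝ) (π : S → A → ℝ)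
    (ρ : S → ℝ) (t : ℕ) :
    stateDist P π ρ t = ρ ᵥ* transMat P π ^ t := by
  induction t with
  | zero => simp [stateDist]
  | succ t ih => rw [stateDist_succ, ih, vecMul_vecMul, pow_succ]

theorem dotProduct_stepMean (P : S → A → S → ℝ) (π : S → A → ℝ) (ρ : S → ℝ)
    (h : S → A → S → ℝ) :
    ρ ⬝ᵥ stepMean P π h = ∑ s, ∑ a, ∑ s', ρ s * π s a * P s a s' * h s a s' := by
  simp only [dotProduct, stepMean, Finset.mul_sum, mul_assoc]

theorem stepMean_potential_shaping {P : S → A → S → ℝ} {π : S → A → ℝ}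
    (hπ : IsStochPol π) (hP : IsStochKer P) (r : S → A → S → ℝ) (γ : ℝ) (f : S → ℝ) :
    stepMean P π (fun s a s' => r s a s' + γ * f s' - f s)
      = stepMean P π r + γ • (transMat P π *ᵥ f) - f := by
  ext s
  have hsum : ∑ a, ∑ s', π s a * P s a s' * f s = f s := by
    simp only [← Finset.sum_mul, ← Finset.mul_sum, (hP s _).2, mul_one, (hπ s).2, one_mul]
  have hmul : (transMat P π *ᵥ f) s = ∑ a, ∑ s', π s a * P s a s' * f s' := by
    simp only [mulVec, dotProduct, transMat, Finset.sum_mul]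
    exact Finset.sum_comm
  rw [Pi.sub_apply, Pi.add_apply, Pi.smul_apply, smul_eq_mul, hmul]
  conv_rhs => rw [← hsum]
  simp only [stepMean, Finset.mul_sum, ← Finset.sum_add_distrib, ← Finset.sum_sub_distrib]
  exact Finset.sum_congr rfl fun a _ => Finset.sum_congr rfl fun s' _ => by ring

theorem ret_eq_tsum (γ : ℝ) (r P : S → A → S → ℝ) (π : S → A → ℝ) (ρ : S → ℝ) :
    ret γ r P π ρ = ∑' t, γ ^ t * (stateDist P π ρ t ⬝ᵥ stepMean P π r) := by
  simp only [ret, dotProduct_stepMean]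

section Discounted

variable [DecidableEq S] {γ : ℝ} {P : S → A → S → ℝ} {π : S → A → ℝ}

theorem summable_geometric_mul_stateDist (hπ : IsStochPol π) (hP : IsStochKer P)
    (hγ0 : 0 ≤ γ) (hγ1 : γ < 1) (ρ : S → ℝ) (s : S) :
    Summable fun t => γ ^ t * stateDist P π ρ t s := by
  simp only [stateDist_eq_vecMul_pow, vecMul, dotProduct, Finset.mul_sum]
  refine summable_sum fun i _ => ?_
  refine ((summable_geometric_mul_pow_apply_of_mem_rowStochastic
    (transMat_mem_rowStochastic hπ hP) hγ0 hγ1 i s).mul_left (ρ i)).congr fun t => ?_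
  ring

theorem summable_geometric_mul_stateDist_dotProduct (hπ : IsStochPol π) (hP : IsStochKer P)
    (hγ0 : 0 ≤ γ) (hγ1 : γ < 1) (ρ v : S → ℝ) :
    Summable fun t => γ ^ t * (stateDist P π ρ t ⬝ᵥ v) := by
  simp only [dotProduct, Finset.mul_sum]
  refine summable_sum fun s _ => ?_
  refine ((summable_geometric_mul_stateDist hπ hP hγ0 hγ1 ρ s).mul_right (v s)).congr fun t => ?_
  ring

theorem visitS_dotProduct (hπ : IsStochPol π) (hP : IsStochKer P) (hγ0 : 0 ≤ γ) (hγ1 : γ < 1)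
    (ρ c : S → ℝ) :
    visitS γ P π ρ ⬝ᵥ c = (1 - γ) * ∑' t, γ ^ t * (stateDist P π ρ t ⬝ᵥ c) := by
  have hsum s : Summable fun t => γ ^ t * (stateDist P π ρ t s * c s) := by
    simpa only [mul_assoc] using
      (summable_geometric_mul_stateDist hπ hP hγ0 hγ1 ρ s).mul_right (c s)
  simp only [visitS, dotProduct, Finset.mul_sum, mul_assoc, ← tsum_mul_right]
  rw [← Finset.mul_sum, ← Summable.tsum_finsetSum fun s _ => hsum s]

theorem stateDist_dotProduct_eq_sum (ρ v : S → ℝ) (t : ℕ) :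
    stateDist P π ρ t ⬝ᵥ v
      = ∑ s₀, ρ s₀ * (stateDist P π (fun s => if s = s₀ then 1 else 0) t ⬝ᵥ v) := by
  have hsingle s₀ : (fun s => if s = s₀ then (1 : ℝ) else 0) = (Pi.single s₀ 1 : S → ℝ) :=
    funext fun s => (Pi.single_apply s₀ 1 s).symm
  simp only [stateDist_eq_vecMul_pow, hsingle, ← dotProduct_mulVec, single_one_dotProduct]
  rfl

theorem expRet_eq_ret (hπ : IsStochPol π) (hP : IsStochKer P) (hγ0 : 0 ≤ γ) (hγ1 : γ < 1)
    (r : S → A → S → ℝ) (ρ : S → ℝ) : expRet γ r P π ρ = ret γ r P π ρ := by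
  have hsum s₀ := summable_geometric_mul_stateDist_dotProduct hπ hP hγ0 hγ1
    (fun s => if s = s₀ then 1 else 0) (stepMean P π r)
  simp only [expRet, valueFn, ret_eq_tsum, ← tsum_mul_left]
  rw [← Summable.tsum_finsetSum fun s₀ _ => (hsum s₀).mul_left (ρ s₀)]
  refine tsum_congr fun t => ?_
  rw [stateDist_dotProduct_eq_sum, Finset.mul_sum]
  exact Finset.sum_congr rfl fun s₀ _ => by ring

end Discounted

end MDP

open MDP in
theorem stmt0_general {S A : Type*} [Fintype S] [Fintype A] [DecidableEq S]
    (γ : ℝ) (hγ0 : 0 ≤ γ) (hγ1 : γ < 1)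
    (r P : S → A → S → ℝ) (π : S → A → ℝ) (ρ₀ : S → ℝ)
    (hπ : IsStochPol π) (hP : IsStochKer P)
    (f : S → ℝ) :
    expRet γ r P π ρ₀ =
      (∑ s : S, ρ₀ s * f s) +
        (1 / (1 - γ)) * ∑ s : S, ∑ a : A, ∑ s' : S,
          visitS γ P π ρ₀ s * π s a * P s a s' * (r s a s' + γ * f s' - f s) := by
  have hshaping t :
      stateDist P π ρ₀ t ⬝ᵥ stepMean P π (fun s a s' => r s a s' + γ * f s' - f s)
        = stateDist P π ρ₀ t ⬝ᵥ stepMean P π r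
          + (γ * (stateDist P π ρ₀ (t + 1) ⬝ᵥ f) - stateDist P π ρ₀ t ⬝ᵥ f) := by
    rw [stepMean_potential_shaping hπ hP, dotProduct_sub, dotProduct_add, dotProduct_smul,
      dotProduct_mulVec, ← stateDist_succ, smul_eq_mul]
    ring
  have htelescope := hasSum_pow_mul_telescope
    (summable_geometric_mul_stateDist_dotProduct hπ hP hγ0 hγ1 ρ₀ f)
  rw [expRet_eq_ret hπ hP hγ0 hγ1, ret_eq_tsum, ← dotProduct_stepMean,
    visitS_dotProduct hπ hP hγ0 hγ1]
  simp only [hshaping, mul_add]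
  rw [Summable.tsum_add (summable_geometric_mul_stateDist_dotProduct hπ hP hγ0 hγ1 ρ₀ _)
    htelescope.summable, htelescope.tsum_eq, one_div,
    inv_mul_cancel_left₀ (sub_ne_zero.2 hγ1.ne')]
  simp only [stateDist, dotProduct]
  ring

theorem stmt0 {S A : Type*} [Fintype S] [Fintype A] [DecidableEq S]
    (γ : ℝ) (hγ0 : 0 ≤ γ) (hγ1 : γ < 1)
    (r P : S → A → S → ℝ) (π : S → A → ℝ) (ρ₀ : S → ℝ)
    (hπ : IsStochPol π) (hP : IsStochKer P) (hρ : IsProb ρ₀)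
    (f : S → ℝ) :
    expRet γ r P π ρ₀ =
      (∑ s : S, ρ₀ s * f s) +
        (1 / (1 - γ)) * ∑ s : S, ∑ a : A, ∑ s' : S,
          visitS γ P π ρ₀ s * π s a * P s a s' * (r s a s' + γ * f s' - f s) :=
  stmt0_general γ hγ0 hγ1 r P π ρ₀ hπ hP f
end

section
/- For any policy π and any two transition kernels P_s, P_t on a finite MDP with rewards bounded in absolute value by R_max, |J^π_{P_t} − J^π_{P_s}| ≤ (2 R_max/(1−γ)) · D_TV(ν^π_{P_s}, ν^π_{P_t}), where ν^π_P is the discounted transition (state-action-next-state) visitation distribution. In particular J^π_{P_t} ≥ J^π_{P_s} − (2 R_max/(1−γ)) · D_TV(ν^π_{P_s}, ν^π_{P_t}). -/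
open scoped BigOperators

/-!
Unrolling the definitions, the return is linear in the transition visitation distribution:
`J^π_P = (1 - γ)⁻¹ ∑ ν^π_P(s,a,s') r(s,a,s')`. Hence `J^π_{P_t} - J^π_{P_s}` is `(1 - γ)⁻¹` times
the pairing of `ν^π_{P_t} - ν^π_{P_s}` with `r`, which is at most `R_max ‖ν^π_{P_t} - ν^π_{P_s}‖₁
= 2 R_max D_TV`. Exchanging the time series with the finite sums is legitimate because a
stochastic kernel does not increase the `ℓ¹` norm, so every state distribution is bounded by
`‖ρ₀‖₁` and the discounted series converge.
-/

noncomputable def stepReward {S A : Type*} [Fintype S] [Fintype A] (r P : S → A → S → ℝ)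
    (π : S → A → ℝ) (s : S) : ℝ :=
  ∑ a, ∑ s', π s a * P s a s' * r s a s'

section Visitation

variable {S A : Type*} [Fintype S] [Fintype A] {P : S → A → S → ℝ} {π : S → A → ℝ}

theorem sum_abs_stepDist_le (hπ : IsStochPol π) (hP : IsStochKer P) (ρ : S → ℝ) :
    ∑ s, |stepDist P π ρ s| ≤ ∑ s, |ρ s| :=
  calc ∑ s, |stepDist P π ρ s| ≤ ∑ s, ∑ s', ∑ a, |ρ s'| * π s' a * P s' a s := by
        gcongr with s
        refine (Finset.abs_sum_le_sum_abs _ _).trans (Finset.sum_le_sum fun s' _ => ?_)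
        refine (Finset.abs_sum_le_sum_abs _ _).trans_eq (Finset.sum_congr rfl fun a _ => ?_)
        rw [abs_mul, abs_mul, abs_of_nonneg ((hπ s').1 a), abs_of_nonneg ((hP s' a).1 s)]
    _ = ∑ s', |ρ s'| * ∑ a, π s' a * ∑ s, P s' a s := by
        simp only [Finset.mul_sum, mul_assoc]
        rw [Finset.sum_comm]
        exact Finset.sum_congr rfl fun s' _ => Finset.sum_comm
    _ = ∑ s', |ρ s'| := by simp only [(hP _ _).2, (hπ _).2, mul_one]

theorem abs_stateDist_le (hπ : IsStochPol π) (hP : IsStochKer P) (ρ₀ : S → ℝ) (t : ℕ) (s : S) :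
    |stateDist P π ρ₀ t s| ≤ ∑ s, |ρ₀ s| := by
  have h_mass : ∀ t, ∑ s, |stateDist P π ρ₀ t s| ≤ ∑ s, |ρ₀ s| := fun t => by
    induction t with
    | zero => exact le_rfl
    | succ t ih => exact (sum_abs_stepDist_le hπ hP _).trans ih
  exact (Finset.single_le_sum (fun s _ => abs_nonneg _) (Finset.mem_univ s)).trans (h_mass t)

theorem summable_geometric_mul_stateDist (hπ : IsStochPol π) (hP : IsStochKer P) {γ : ℝ}
    (hγ0 : 0 ≤ γ) (hγ1 : γ < 1) (ρ₀ : S → ℝ) (s : S) :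
    Summable fun t => γ ^ t * stateDist P π ρ₀ t s := by
  refine .of_norm_bounded ((summable_geometric_of_lt_one hγ0 hγ1).mul_right (∑ s, |ρ₀ s|))
    fun t => ?_
  rw [Real.norm_eq_abs, abs_mul, abs_of_nonneg (pow_nonneg hγ0 t)]
  exact mul_le_mul_of_nonneg_left (abs_stateDist_le hπ hP ρ₀ t s) (pow_nonneg hγ0 t)

theorem stateDist_sum_mul {ι : Type*} [Fintype ι] (c : ι → ℝ) (ρ : ι → S → ℝ) (t : ℕ) (s : S) :
    stateDist P π (fun s => ∑ i, c i * ρ i s) t s = ∑ i, c i * stateDist P π (ρ i) t s := by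
  induction t generalizing s with
  | zero => rfl
  | succ t ih =>
    simp only [stateDist, stepDist, ih, Finset.sum_mul, Finset.mul_sum, mul_assoc]
    exact (Finset.sum_congr rfl fun _ _ => Finset.sum_comm).trans Finset.sum_comm

theorem visitS_sum_mul (hπ : IsStochPol π) (hP : IsStochKer P) {γ : ℝ} (hγ0 : 0 ≤ γ)
    (hγ1 : γ < 1) {ι : Type*} [Fintype ι] (c : ι → ℝ) (ρ : ι → S → ℝ) (s : S) :
    visitS γ P π (fun s => ∑ i, c i * ρ i s) s = ∑ i, c i * visitS γ P π (ρ i) s := by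
  simp only [visitS, stateDist_sum_mul, Finset.mul_sum, mul_left_comm (γ ^ _) (c _)]
  rw [Summable.tsum_finsetSum fun i _ =>
    (summable_geometric_mul_stateDist hπ hP hγ0 hγ1 (ρ i) s).mul_left (c i)]
  simp only [tsum_mul_left, Finset.mul_sum, mul_left_comm (1 - γ)]

theorem ret_eq_sum_visitS (hπ : IsStochPol π) (hP : IsStochKer P) {γ : ℝ} (hγ0 : 0 ≤ γ)
    (hγ1 : γ < 1) (r : S → A → S → ℝ) (ρ : S → ℝ) :
    ret γ r P π ρ = (1 - γ)⁻¹ * ∑ s, visitS γ P π ρ s * stepReward r P π s := by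
  have h_term : ∀ t, γ ^ t * ∑ s, ∑ a, ∑ s', stateDist P π ρ t s * π s a * P s a s' * r s a s' =
      ∑ s, γ ^ t * stateDist P π ρ t s * stepReward r P π s := fun t => by
    simp only [stepReward, Finset.mul_sum, mul_assoc]
  rw [ret, tsum_congr h_term, Summable.tsum_finsetSum fun s _ =>
    (summable_geometric_mul_stateDist hπ hP hγ0 hγ1 ρ s).mul_right _, Finset.mul_sum]
  refine Finset.sum_congr rfl fun s _ => ?_
  rw [tsum_mul_right, visitS, mul_assoc, inv_mul_cancel_left₀ (sub_ne_zero.2 hγ1.ne')]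

theorem visitT_apply (γ : ℝ) (ρ : S → ℝ) (x : S × A × S) :
    visitT γ P π ρ x = visitS γ P π ρ x.1 * π x.1 x.2.1 * P x.1 x.2.1 x.2.2 := by
  simp only [visitT, visitS, tsum_mul_right]
  ring

theorem expRet_eq_sum_visitT [DecidableEq S] (hπ : IsStochPol π) (hP : IsStochKer P) {γ : ℝ}
    (hγ0 : 0 ≤ γ) (hγ1 : γ < 1) (r : S → A → S → ℝ) (ρ₀ : S → ℝ) :
    expRet γ r P π ρ₀ = (1 - γ)⁻¹ * ∑ x, visitT γ P π ρ₀ x * r x.1 x.2.1 x.2.2 := by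
  have h_delta : ρ₀ = fun s => ∑ s₀, ρ₀ s₀ * (if s = s₀ then 1 else 0 : ℝ) := by
    ext s; simp
  calc expRet γ r P π ρ₀
      = (1 - γ)⁻¹ * ∑ s, (∑ s₀, ρ₀ s₀ * visitS γ P π (fun s'' => if s'' = s₀ then 1 else 0) s) *
          stepReward r P π s := by
        simp only [expRet, valueFn, ret_eq_sum_visitS hπ hP hγ0 hγ1, Finset.mul_sum,
          Finset.sum_mul]
        rw [Finset.sum_comm]
        exact Finset.sum_congr rfl fun _ _ => Finset.sum_congr rfl fun _ _ => by ring
    _ = (1 - γ)⁻¹ * ∑ s, visitS γ P π ρ₀ s * stepReward r P π s := by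
        simp only [← visitS_sum_mul hπ hP hγ0 hγ1, ← h_delta]
    _ = (1 - γ)⁻¹ * ∑ x, visitT γ P π ρ₀ x * r x.1 x.2.1 x.2.2 := by
        simp only [Fintype.sum_prod_type, visitT_apply, stepReward, Finset.mul_sum, mul_assoc]

end Visitation

theorem abs_sum_sub_mul_le_tvDist {X : Type*} [Fintype X] (p q f : X → ℝ) {M : ℝ}
    (hf : ∀ x, |f x| ≤ M) : |∑ x, (q x - p x) * f x| ≤ 2 * M * tvDist p q :=
  calc |∑ x, (q x - p x) * f x| ≤ ∑ x, |p x - q x| * M := by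
        refine (Finset.abs_sum_le_sum_abs _ _).trans (Finset.sum_le_sum fun x _ => ?_)
        rw [abs_mul, abs_sub_comm]
        exact mul_le_mul_of_nonneg_left (hf x) (abs_nonneg _)
    _ = 2 * M * tvDist p q := by rw [tvDist, ← Finset.sum_mul]; ring

theorem stmt1_general {S A : Type*} [Fintype S] [Fintype A] [DecidableEq S]
    (γ : ℝ) (hγ0 : 0 ≤ γ) (hγ1 : γ < 1)
    (r Ps Pt : S → A → S → ℝ) (π : S → A → ℝ) (ρ₀ : S → ℝ)
    (hπ : IsStochPol π) (hPs : IsStochKer Ps) (hPt : IsStochKer Pt)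
    (Rmax : ℝ) (hr : ∀ s a s', |r s a s'| ≤ Rmax) :
    |expRet γ r Pt π ρ₀ - expRet γ r Ps π ρ₀| ≤
        (2 * Rmax / (1 - γ)) * tvDist (visitT γ Ps π ρ₀) (visitT γ Pt π ρ₀) ∧
      expRet γ r Pt π ρ₀ ≥
        expRet γ r Ps π ρ₀ -
          (2 * Rmax / (1 - γ)) * tvDist (visitT γ Ps π ρ₀) (visitT γ Pt π ρ₀) := by
  have h_diff : expRet γ r Pt π ρ₀ - expRet γ r Ps π ρ₀ = (1 - γ)⁻¹ *
      ∑ x, (visitT γ Pt π ρ₀ x - visitT γ Ps π ρ₀ x) * r x.1 x.2.1 x.2.2 := by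
    simp only [expRet_eq_sum_visitT hπ hPt hγ0 hγ1, expRet_eq_sum_visitT hπ hPs hγ0 hγ1,
      ← mul_sub, ← Finset.sum_sub_distrib, sub_mul]
  have h_bound : |expRet γ r Pt π ρ₀ - expRet γ r Ps π ρ₀| ≤
      (2 * Rmax / (1 - γ)) * tvDist (visitT γ Ps π ρ₀) (visitT γ Pt π ρ₀) := by
    rw [h_diff, abs_mul, abs_of_pos (inv_pos.2 (sub_pos.2 hγ1)), div_mul_eq_mul_div,
      div_eq_inv_mul]
    gcongr
    exact abs_sum_sub_mul_le_tvDist _ _ _ fun x => hr _ _ _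
  exact ⟨h_bound, by linarith [neg_le_of_abs_le h_bound]⟩

theorem stmt1 {S A : Type*} [Fintype S] [Fintype A] [DecidableEq S]
    (γ : ℝ) (hγ0 : 0 ≤ γ) (hγ1 : γ < 1)
    (r Ps Pt : S → A → S → ℝ) (π : S → A → ℝ) (ρ₀ : S → ℝ)
    (hπ : IsStochPol π) (hPs : IsStochKer Ps) (hPt : IsStochKer Pt) (hρ : IsProb ρ₀)
    (Rmax : ℝ) (hr : ∀ s a s', |r s a s'| ≤ Rmax) :
    |expRet γ r Pt π ρ₀ - expRet γ r Ps π ρ₀| ≤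
        (2 * Rmax / (1 - γ)) * tvDist (visitT γ Ps π ρ₀) (visitT γ Pt π ρ₀) ∧
      expRet γ r Pt π ρ₀ ≥
        expRet γ r Ps π ρ₀ -
          (2 * Rmax / (1 - γ)) * tvDist (visitT γ Ps π ρ₀) (visitT γ Pt π ρ₀) :=
  stmt1_general γ hγ0 hγ1 r Ps Pt π ρ₀ hπ hPs hPt Rmax hr
end

section
/- For any policy π and transition kernels P_s, P_t with rewards bounded by R_max, if ν^π_{P_s} is absolutely continuous with respect to ν^π_{P_t}, then J^π_{P_t} ≥ J^π_{P_s} − (√2 · R_max/(1−γ)) · √(D_KL(ν^π_{P_s} ‖ ν^π_{P_t})). -/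
open scoped BigOperators

/-!
Averaging the reward against the discounted transition visitation distribution gives the
return: `(1 - γ) J^π_P = ∑ₓ ν^π_P(x) r(x)`. Hence `(1 - γ) (J_s - J_t) ≤ 2 R_max D_TV(ν_s, ν_t)`,
and Pinsker's inequality `D_TV ≤ √(D_KL / 2)` finishes the proof. Pinsker itself follows from the
pointwise bound `3 (x - 1)² ≤ 2 (x + 2) (x log x - x + 1)` and Cauchy–Schwarz with weights `p + 2q`.
-/

open Finset InformationTheory Matrix

lemma five_div_two_le_log_add_inv {x : ℝ} (hx : 0 < x) :
    5 / 2 ≤ Real.log x + (4 * x)⁻¹ + 27 / 4 * (x + 2)⁻¹ := by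
  set f : ℝ → ℝ := fun x => Real.log x + (4 * x)⁻¹ + 27 / 4 * (x + 2)⁻¹
  -- `f' = (x - 1) ^ 3 / (x ^ 2 * (x + 2) ^ 2)`, so `f` is minimal at `1`, where it equals `5 / 2`.
  have hderiv : ∀ y, 0 < y → HasDerivAt f ((y - 1) ^ 3 / (y ^ 2 * (y + 2) ^ 2)) y := by
    intro y hy
    have h4y : HasDerivAt (fun y : ℝ => 4 * y) 4 y := by
      simpa using (hasDerivAt_id y).const_mul (4 : ℝ)
    have hy2 : HasDerivAt (fun y : ℝ => y + 2) 1 y := (hasDerivAt_id y).add_const 2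
    refine (((Real.hasDerivAt_log hy.ne').add (h4y.inv (by positivity))).add
      ((hy2.inv (by positivity)).const_mul (27 / 4))).congr_deriv ?_
    field_simp
    ring
  have hcont : ContinuousOn f (Set.Ioi 0) := fun y hy =>
    (hderiv y hy).continuousAt.continuousWithinAt
  have hf1 : f 1 = 5 / 2 := by norm_num [f]
  rcases le_total x 1 with hx1 | hx1
  · have hanti : AntitoneOn f (Set.Ioc 0 1) := by
      refine antitoneOn_of_hasDerivWithinAt_nonpos
        (f' := fun y => (y - 1) ^ 3 / (y ^ 2 * (y + 2) ^ 2)) (convex_Ioc 0 1)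
        (hcont.mono Set.Ioc_subset_Ioi_self) (fun y hy => ?_) (fun y hy => ?_)
      · rw [interior_Ioc] at hy
        exact (hderiv y hy.1).hasDerivWithinAt
      · rw [interior_Ioc] at hy
        exact div_nonpos_of_nonpos_of_nonneg
          (Odd.pow_nonpos (by decide) (by linarith [hy.2])) (by positivity)
    exact hf1 ▸ hanti ⟨hx, hx1⟩ ⟨one_pos, le_rfl⟩ hx1
  · have hmono : MonotoneOn f (Set.Ici 1) := by
      refine monotoneOn_of_hasDerivWithinAt_nonneg
        (f' := fun y => (y - 1) ^ 3 / (y ^ 2 * (y + 2) ^ 2)) (convex_Ici 1)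
        (hcont.mono fun y (hy : 1 ≤ y) => show 0 < y by linarith) (fun y hy => ?_) (fun y hy => ?_)
      · rw [interior_Ici] at hy
        exact (hderiv y (lt_trans one_pos hy)).hasDerivWithinAt
      · rw [interior_Ici] at hy
        exact div_nonneg (pow_nonneg (by linarith [hy.out]) 3) (by positivity)
    exact hf1 ▸ hmono Set.self_mem_Ici hx1 hx1

lemma three_mul_sq_le_mul_klFun {x : ℝ} (hx : 0 ≤ x) :
    3 * (x - 1) ^ 2 ≤ 2 * (x + 2) * klFun x := by
  rcases hx.eq_or_lt with rfl | hx
  · norm_num [klFun_zero]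
  have h := five_div_two_le_log_add_inv hx
  rw [klFun_apply]
  have hfactor : 3 * (x - 1) ^ 2 - 2 * (x + 2) * (x * Real.log x + 1 - x)
      = 2 * x * (x + 2) * (5 / 2 - (Real.log x + (4 * x)⁻¹ + 27 / 4 * (x + 2)⁻¹)) := by
    field_simp
    ring
  nlinarith [mul_nonneg (mul_nonneg hx.le (by linarith : (0 : ℝ) ≤ x + 2)) (sub_nonneg.2 h)]

lemma three_mul_sq_sub_le_mul_klFun_div {p q : ℝ} (hp : 0 ≤ p) (hq : 0 ≤ q)
    (hpq : q = 0 → p = 0) :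
    3 * (p - q) ^ 2 ≤ 2 * (p + 2 * q) * (q * klFun (p / q)) := by
  rcases hq.eq_or_lt with rfl | hq
  · simp [hpq rfl]
  have h := three_mul_sq_le_mul_klFun (div_nonneg hp hq.le)
  calc 3 * (p - q) ^ 2 = q ^ 2 * (3 * (p / q - 1) ^ 2) := by field_simp
    _ ≤ q ^ 2 * (2 * (p / q + 2) * klFun (p / q)) := by gcongr
    _ = 2 * (p + 2 * q) * (q * klFun (p / q)) := by field_simp

lemma klDiv'_eq_sum_mul_klFun {X : Type*} [Fintype X] {p q : X → ℝ}
    (hsum : ∑ x, p x = ∑ x, q x) (hac : ∀ x, q x = 0 → p x = 0) :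
    klDiv' p q = ∑ x, q x * klFun (p x / q x) := by
  have hterm : ∀ x, q x * klFun (p x / q x) = p x * Real.log (p x / q x) + (q x - p x) := by
    intro x
    rcases eq_or_ne (q x) 0 with hqx | hqx
    · simp [hqx, hac x hqx]
    · rw [klFun_apply]
      field_simp
      ring
  simp only [hterm, sum_add_distrib, sum_sub_distrib, hsum, sub_self, add_zero, klDiv']

theorem tvDist_le_sqrt_klDiv' {X : Type*} [Fintype X] {p q : X → ℝ} (hp : IsProb p)
    (hq : IsProb q) (hac : ∀ x, q x = 0 → p x = 0) : tvDist p q ≤ √(klDiv' p q / 2) := by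
  have hcs : (∑ x, |p x - q x|) ^ 2 ≤
      (∑ x, 2 / 3 * (p x + 2 * q x)) * ∑ x, q x * klFun (p x / q x) := by
    refine sum_sq_le_sum_mul_sum_of_sq_le_mul _ (fun x _ => ?_) (fun x _ => ?_) (fun x _ => ?_)
    · have := hp.1 x; have := hq.1 x; positivity
    · exact mul_nonneg (hq.1 x) (klFun_nonneg (div_nonneg (hp.1 x) (hq.1 x)))
    · have := three_mul_sq_sub_le_mul_klFun_div (hp.1 x) (hq.1 x) (hac x)
      rw [sq_abs]
      linarith
  have hweights : ∑ x, 2 / 3 * (p x + 2 * q x) = 2 := by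
    rw [← mul_sum, sum_add_distrib, ← mul_sum, hp.2, hq.2]
    norm_num
  rw [hweights, ← klDiv'_eq_sum_mul_klFun (hp.2.trans hq.2.symm) hac] at hcs
  rw [Real.le_sqrt (by unfold tvDist; positivity) (by nlinarith [sq_nonneg (∑ x, |p x - q x|)]),
    tvDist]
  linarith

lemma sum_sub_mul_le_two_mul_tvDist {X : Type*} [Fintype X] (p q f : X → ℝ) {R : ℝ}
    (hf : ∀ x, |f x| ≤ R) : ∑ x, (p x - q x) * f x ≤ 2 * R * tvDist p q :=
  calc ∑ x, (p x - q x) * f x ≤ ∑ x, |p x - q x| * R := sum_le_sum fun x _ =>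
        (le_abs_self _).trans <| (abs_mul _ _).trans_le <|
          mul_le_mul_of_nonneg_left (hf x) (abs_nonneg _)
    _ = 2 * R * tvDist p q := by rw [tvDist, ← sum_mul]; ring

section MDP

variable {S A : Type*} [Fintype S] [Fintype A] {P : S → A → S → ℝ} {π : S → A → ℝ}

def transMatrix (P : S → A → S → ℝ) (π : S → A → ℝ) : Matrix S S ℝ :=
  fun s s' => ∑ a, π s a * P s a s'

def rewardVec (r P : S → A → S → ℝ) (π : S → A → ℝ) : S → ℝ :=
  fun s => ∑ a, ∑ s', π s a * P s a s' * r s a s'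

lemma IsProb.abs_dotProduct_le {ρ w : S → ℝ} {R : ℝ} (hρ : IsProb ρ) (hw : ∀ s, |w s| ≤ R) :
    |ρ ⬝ᵥ w| ≤ R :=
  calc |ρ ⬝ᵥ w| ≤ ∑ s, ρ s * R := by
        refine (abs_sum_le_sum_abs _ _).trans (sum_le_sum fun s _ => ?_)
        rw [abs_mul, abs_of_nonneg (hρ.1 s)]
        exact mul_le_mul_of_nonneg_left (hw s) (hρ.1 s)
    _ = R := by rw [← sum_mul, hρ.2, one_mul]

lemma transMatrix_mem_rowStochastic [DecidableEq S] (hP : IsStochKer P) (hπ : IsStochPol π) :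
    transMatrix P π ∈ rowStochastic ℝ S := by
  refine mem_rowStochastic_iff_sum.2 ⟨fun s s' => ?_, fun s => ?_⟩
  · exact sum_nonneg fun a _ => mul_nonneg ((hπ s).1 a) ((hP s a).1 s')
  · simp only [transMatrix]
    rw [sum_comm]
    simp only [← mul_sum, (hP s _).2, mul_one, (hπ s).2]

lemma stateDist_eq_vecMul [DecidableEq S] (ρ : S → ℝ) (t : ℕ) :
    stateDist P π ρ t = ρ ᵥ* transMatrix P π ^ t := by
  induction t with
  | zero => simp [stateDist]
  | succ t ih =>
    rw [pow_succ, ← vecMul_vecMul, ← ih]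
    ext s
    simp only [stateDist, stepDist, vecMul, dotProduct, transMatrix, mul_sum, mul_assoc]

lemma IsProb.stateDist [DecidableEq S] (hP : IsStochKer P) (hπ : IsStochPol π) {ρ : S → ℝ}
    (hρ : IsProb ρ) (t : ℕ) : IsProb (stateDist P π ρ t) := by
  have hM := pow_mem (transMatrix_mem_rowStochastic hP hπ) t
  rw [stateDist_eq_vecMul]
  refine ⟨nonneg_vecMul_of_mem_rowStochastic hM hρ.1, ?_⟩
  simpa [dotProduct_one] using
    vecMul_dotProduct_one_eq_one_rowStochastic hM (by simpa [dotProduct_one] using hρ.2)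

lemma stateDist_indicator [DecidableEq S] (s₀ : S) (t : ℕ) :
    stateDist P π (fun s => if s = s₀ then 1 else 0) t = (transMatrix P π ^ t) s₀ := by
  have hδ : (fun s => if s = s₀ then (1 : ℝ) else 0) = Pi.single s₀ 1 := by
    ext s
    simp [Pi.single_apply]
  rw [stateDist_eq_vecMul, hδ, single_one_vecMul]
  rfl

lemma ret_eq_tsum_dotProduct (γ : ℝ) (r : S → A → S → ℝ) (ρ : S → ℝ) :
    ret γ r P π ρ = ∑' t, γ ^ t * (stateDist P π ρ t ⬝ᵥ rewardVec r P π) := by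
  simp only [ret, dotProduct, rewardVec, mul_sum, mul_assoc]

lemma summable_pow_mul_of_abs_le {γ C : ℝ} (hγ0 : 0 ≤ γ) (hγ1 : γ < 1) {f : ℕ → ℝ}
    (hf : ∀ t, |f t| ≤ C) : Summable fun t => γ ^ t * f t :=
  ((summable_geometric_of_lt_one hγ0 hγ1).mul_right C).of_norm_bounded fun t => by
    rw [Real.norm_eq_abs, abs_mul, abs_of_nonneg (pow_nonneg hγ0 t)]
    exact mul_le_mul_of_nonneg_left (hf t) (pow_nonneg hγ0 t)

lemma expRet_eq_ret [DecidableEq S] {γ : ℝ} (hγ0 : 0 ≤ γ) (hγ1 : γ < 1) (hP : IsStochKer P)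
    (hπ : IsStochPol π) (r : S → A → S → ℝ) (ρ : S → ℝ) :
    expRet γ r P π ρ = ret γ r P π ρ := by
  set M := transMatrix P π
  set w := rewardVec r P π
  have hvalue : ∀ s, valueFn γ r P π s = ∑' t, γ ^ t * (M ^ t *ᵥ w) s := fun s => by
    simp only [valueFn, ret_eq_tsum_dotProduct, stateDist_indicator]
    rfl
  have hsummable : ∀ s, Summable fun t => γ ^ t * (M ^ t *ᵥ w) s := fun s => by
    refine summable_pow_mul_of_abs_le (C := ∑ s', |w s'|) hγ0 hγ1 fun t => ?_
    have hM := pow_mem (transMatrix_mem_rowStochastic hP hπ) t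
    have hrow : IsProb ((M ^ t) s) :=
      ⟨fun _ => nonneg_of_mem_rowStochastic hM, sum_row_of_mem_rowStochastic hM s⟩
    exact hrow.abs_dotProduct_le fun s' =>
      single_le_sum (f := fun s => |w s|) (fun _ _ => abs_nonneg _) (mem_univ s')
  calc expRet γ r P π ρ = ∑ s, ∑' t, ρ s * (γ ^ t * (M ^ t *ᵥ w) s) := by
        simp only [expRet, hvalue, tsum_mul_left]
    _ = ∑' t, γ ^ t * (ρ ⬝ᵥ (M ^ t *ᵥ w)) := by
        rw [← Summable.tsum_finsetSum fun s _ => (hsummable s).mul_left (ρ s)]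
        simp only [dotProduct, mul_sum]
        congr 1; ext t; congr 1; ext s; ring
    _ = ret γ r P π ρ := by
        simp only [ret_eq_tsum_dotProduct, stateDist_eq_vecMul, dotProduct_mulVec, M, w]

lemma sum_visitT_mul [DecidableEq S] {γ : ℝ} (hγ0 : 0 ≤ γ) (hγ1 : γ < 1) (hP : IsStochKer P)
    (hπ : IsStochPol π) {ρ : S → ℝ} (hρ : IsProb ρ) (r : S → A → S → ℝ) :
    ∑ x, visitT γ P π ρ x * r x.1 x.2.1 x.2.2 = (1 - γ) * ret γ r P π ρ := by
  set c : S × A × S → ℝ := fun x => π x.1 x.2.1 * P x.1 x.2.1 x.2.2 * r x.1 x.2.1 x.2.2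
  have hsummable : ∀ x, Summable fun t => γ ^ t * (stateDist P π ρ t x.1 * c x) := fun x => by
    refine summable_pow_mul_of_abs_le (C := |c x|) hγ0 hγ1 fun t => ?_
    have hd := IsProb.stateDist hP hπ hρ t
    rw [abs_mul, abs_of_nonneg (hd.1 x.1)]
    refine mul_le_of_le_one_left (abs_nonneg _) ?_
    exact hd.2 ▸ single_le_sum (fun s _ => hd.1 s) (mem_univ x.1)
  calc ∑ x, visitT γ P π ρ x * r x.1 x.2.1 x.2.2
      = (1 - γ) * ∑ x, ∑' t, γ ^ t * (stateDist P π ρ t x.1 * c x) := by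
        simp only [visitT, mul_sum, mul_assoc, ← tsum_mul_right, c]
    _ = (1 - γ) * ret γ r P π ρ := by
        rw [← Summable.tsum_finsetSum fun x _ => hsummable x, ret_eq_tsum_dotProduct]
        simp only [Fintype.sum_prod_type, dotProduct, rewardVec, mul_sum, mul_assoc, c]

lemma isProb_visitT [DecidableEq S] {γ : ℝ} (hγ0 : 0 ≤ γ) (hγ1 : γ < 1) (hP : IsStochKer P)
    (hπ : IsStochPol π) {ρ : S → ℝ} (hρ : IsProb ρ) : IsProb (visitT γ P π ρ) := by
  refine ⟨fun x => mul_nonneg (by linarith) (tsum_nonneg fun t => ?_), ?_⟩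
  · have hd := IsProb.stateDist hP hπ hρ t
    have := (hπ x.1).1 x.2.1
    have := (hP x.1 x.2.1).1 x.2.2
    have := hd.1 x.1
    positivity
  · have hw : rewardVec (fun _ _ _ => 1) P π = 1 := by
      ext s
      simp only [rewardVec, mul_one, ← mul_sum, (hP s _).2, (hπ s).2, Pi.one_apply]
    have hd : ∀ t, stateDist P π ρ t ⬝ᵥ 1 = 1 := fun t => by
      rw [dotProduct_one]
      exact (IsProb.stateDist hP hπ hρ t).2
    simpa [ret_eq_tsum_dotProduct, hw, hd, tsum_geometric_of_lt_one hγ0 hγ1,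
      (by linarith : 1 - γ ≠ 0)] using sum_visitT_mul hγ0 hγ1 hP hπ hρ fun _ _ _ => 1

lemma one_sub_mul_expRet [DecidableEq S] {γ : ℝ} (hγ0 : 0 ≤ γ) (hγ1 : γ < 1)
    (hP : IsStochKer P) (hπ : IsStochPol π) {ρ : S → ℝ} (hρ : IsProb ρ) (r : S → A → S → ℝ) :
    (1 - γ) * expRet γ r P π ρ = ∑ x, visitT γ P π ρ x * r x.1 x.2.1 x.2.2 := by
  rw [expRet_eq_ret hγ0 hγ1 hP hπ, sum_visitT_mul hγ0 hγ1 hP hπ hρ]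

end MDP

theorem stmt3 {S A : Type*} [Fintype S] [Fintype A] [DecidableEq S]
    (γ : ℝ) (hγ0 : 0 ≤ γ) (hγ1 : γ < 1)
    (r Ps Pt : S → A → S → ℝ) (π : S → A → ℝ) (ρ₀ : S → ℝ)
    (hπ : IsStochPol π) (hPs : IsStochKer Ps) (hPt : IsStochKer Pt) (hρ : IsProb ρ₀)
    (Rmax : ℝ) (hr : ∀ s a s', |r s a s'| ≤ Rmax)
    (hac : ∀ x : S × A × S, visitT γ Pt π ρ₀ x = 0 → visitT γ Ps π ρ₀ x = 0) :
    expRet γ r Pt π ρ₀ ≥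
      expRet γ r Ps π ρ₀ -
        (Real.sqrt 2 * Rmax / (1 - γ)) *
          Real.sqrt (klDiv' (visitT γ Ps π ρ₀) (visitT γ Pt π ρ₀)) := by
  set νs := visitT γ Ps π ρ₀
  set νt := visitT γ Pt π ρ₀
  have hνs : IsProb νs := isProb_visitT hγ0 hγ1 hPs hπ hρ
  obtain ⟨x, -⟩ := nonempty_of_sum_ne_zero (hνs.2 ▸ one_ne_zero : ∑ x, νs x ≠ 0)
  have hRmax : 0 ≤ Rmax := (abs_nonneg _).trans (hr x.1 x.2.1 x.2.2)
  have hgap :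
      (1 - γ) * (expRet γ r Ps π ρ₀ - expRet γ r Pt π ρ₀) ≤ 2 * Rmax * tvDist νs νt := by
    rw [mul_sub, one_sub_mul_expRet hγ0 hγ1 hPs hπ hρ, one_sub_mul_expRet hγ0 hγ1 hPt hπ hρ,
      ← sum_sub_distrib]
    simpa only [sub_mul] using
      sum_sub_mul_le_two_mul_tvDist νs νt _ fun x => hr x.1 x.2.1 x.2.2
  have hpinsker := tvDist_le_sqrt_klDiv' hνs (isProb_visitT hγ0 hγ1 hPt hπ hρ) hac
  have hsqrt : 2 * √(klDiv' νs νt / 2) = √2 * √(klDiv' νs νt) := by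
    rw [Real.sqrt_div' _ zero_le_two]
    field_simp
    rw [Real.sq_sqrt zero_le_two, mul_comm]
  have h1γ : 0 < 1 - γ := by linarith
  have hscaled : (1 - γ) * (expRet γ r Ps π ρ₀ - expRet γ r Pt π ρ₀) ≤
      (1 - γ) * (√2 * Rmax / (1 - γ) * √(klDiv' νs νt)) :=
    calc _ ≤ 2 * Rmax * tvDist νs νt := hgap
      _ ≤ 2 * Rmax * √(klDiv' νs νt / 2) := by gcongr
      _ = (1 - γ) * (√2 * Rmax / (1 - γ) * √(klDiv' νs νt)) := by
        rw [mul_comm 2, mul_assoc, hsqrt]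
        field_simp
  linarith [le_of_mul_le_mul_left hscaled h1γ]
end

section
/- For any policy π and kernels P_s, P_t, D_TV(ν^π_{P_s}, ν^π_{P_t}) ≤ D_TV(d^π_{P_s}, d^π_{P_t}) + E_{s∼d^π_{P_s}, a∼π(·|s)}[D_TV(P_s(·|s,a), P_t(·|s,a))], so the transition-visitation lower bound of Proposition 2 is at least as tight as the two-term lower bound of Proposition 1. -/
open scoped BigOperators

section Aux

variable {S A : Type*} [Fintype S] [Fintype A] [DecidableEq S]

lemma stateDist_nonneg (P : S → A → S → ℝ) (π : S → A → ℝ) (ρ₀ : S → ℝ)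
    (hπ : IsStochPol π) (hP : IsStochKer P) (hρ : ∀ s, 0 ≤ ρ₀ s) :
    ∀ t s, 0 ≤ stateDist P π ρ₀ t s := by
  intro t
  induction t with
  | zero => exact hρ
  | succ t ih =>
    intro s
    apply Finset.sum_nonneg; intro s' _
    apply Finset.sum_nonneg; intro a _
    exact mul_nonneg (mul_nonneg (ih s') ((hπ s').1 a)) ((hP s' a).1 s)

lemma visitS_nonneg (γ : ℝ) (hγ0 : 0 ≤ γ) (hγ1 : γ < 1)
    (P : S → A → S → ℝ) (π : S → A → ℝ) (ρ₀ : S → ℝ)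
    (hπ : IsStochPol π) (hP : IsStochKer P) (hρ : ∀ s, 0 ≤ ρ₀ s) (s : S) :
    0 ≤ visitS γ P π ρ₀ s := by
  apply mul_nonneg (by linarith)
  apply tsum_nonneg; intro t
  exact mul_nonneg (pow_nonneg hγ0 t) (stateDist_nonneg P π ρ₀ hπ hP hρ t s)

lemma visitT_eq (γ : ℝ) (P : S → A → S → ℝ) (π : S → A → ℝ) (ρ₀ : S → ℝ)
    (s : S) (a : A) (s' : S) :
    visitT γ P π ρ₀ (s, a, s') = visitS γ P π ρ₀ s * (π s a * P s a s') := by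
  simp only [visitT, visitS]
  rw [mul_assoc]
  congr 1
  rw [← tsum_mul_right]
  congr 1; funext t; ring

end Aux

theorem stmt14 {S A : Type*} [Fintype S] [Fintype A] [DecidableEq S]
    (γ : ℝ) (hγ0 : 0 ≤ γ) (hγ1 : γ < 1)
    (Ps Pt : S → A → S → ℝ) (π : S → A → ℝ) (ρ₀ : S → ℝ)
    (hπ : IsStochPol π) (hPs : IsStochKer Ps) (hPt : IsStochKer Pt) (hρ : IsProb ρ₀) :
    tvDist (visitT γ Ps π ρ₀) (visitT γ Pt π ρ₀) ≤
      tvDist (visitS γ Ps π ρ₀) (visitS γ Pt π ρ₀) +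
        ∑ s : S, ∑ a : A, visitS γ Ps π ρ₀ s * π s a *
          tvDist (fun s' => Ps s a s') (fun s' => Pt s a s') := by
  set ds := visitS γ Ps π ρ₀ with hds_def
  set dt := visitS γ Pt π ρ₀ with hdt_def
  have hds : ∀ s, 0 ≤ ds s := visitS_nonneg γ hγ0 hγ1 Ps π ρ₀ hπ hPs hρ.1
  have key : ∀ s a s', |visitT γ Ps π ρ₀ (s, a, s') - visitT γ Pt π ρ₀ (s, a, s')|
      ≤ ds s * π s a * |Ps s a s' - Pt s a s'| + |ds s - dt s| * (π s a * Pt s a s') := by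
    intro s a s'
    rw [visitT_eq, visitT_eq, ← hds_def, ← hdt_def]
    have heq : ds s * (π s a * Ps s a s') - dt s * (π s a * Pt s a s')
        = ds s * π s a * (Ps s a s' - Pt s a s')
          + (ds s - dt s) * (π s a * Pt s a s') := by ring
    rw [heq]
    refine (abs_add_le _ _).trans (le_of_eq ?_)
    rw [abs_mul, abs_mul, abs_mul, abs_of_nonneg (hds s), abs_of_nonneg ((hπ s).1 a),
      abs_of_nonneg (mul_nonneg ((hπ s).1 a) ((hPt s a).1 s'))]
  have lhs_eq : tvDist (visitT γ Ps π ρ₀) (visitT γ Pt π ρ₀)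
      = (1 / 2) * ∑ s : S, ∑ a : A, ∑ s' : S,
          |visitT γ Ps π ρ₀ (s, a, s') - visitT γ Pt π ρ₀ (s, a, s')| := by
    simp [tvDist, Fintype.sum_prod_type]
  rw [lhs_eq]
  have hsum1 : ∀ s a, ∑ s' : S, ds s * π s a * |Ps s a s' - Pt s a s'|
      = 2 * (ds s * π s a * tvDist (fun s' => Ps s a s') (fun s' => Pt s a s')) := by
    intro s a
    rw [← Finset.mul_sum, tvDist]
    ring
  have hsum2 : ∀ s, ∑ a : A, ∑ s' : S, |ds s - dt s| * (π s a * Pt s a s')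
      = |ds s - dt s| := by
    intro s
    have : ∀ a : A, ∑ s' : S, |ds s - dt s| * (π s a * Pt s a s')
        = |ds s - dt s| * π s a := by
      intro a
      rw [← Finset.mul_sum, ← Finset.mul_sum, (hPt s a).2, mul_one]
    simp_rw [this]
    rw [← Finset.mul_sum, (hπ s).2, mul_one]
  calc (1 / 2) * ∑ s : S, ∑ a : A, ∑ s' : S,
          |visitT γ Ps π ρ₀ (s, a, s') - visitT γ Pt π ρ₀ (s, a, s')|
      ≤ (1 / 2) * ∑ s : S, ∑ a : A, ∑ s' : S,
          (ds s * π s a * |Ps s a s' - Pt s a s'| + |ds s - dt s| * (π s a * Pt s a s')) := by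
        gcongr with s _ a _ s' _
        exact key s a s'
    _ = (1 / 2) * ∑ s : S,
          (2 * ∑ a : A, ds s * π s a * tvDist (fun s' => Ps s a s') (fun s' => Pt s a s')
            + |ds s - dt s|) := by
        congr 1
        apply Finset.sum_congr rfl
        intro s _
        simp_rw [Finset.sum_add_distrib, hsum1]
        rw [hsum2 s, ← Finset.mul_sum]
    _ = tvDist ds dt + ∑ s : S, ∑ a : A, ds s * π s a *
          tvDist (fun s' => Ps s a s') (fun s' => Pt s a s') := by
        rw [Finset.sum_add_distrib, tvDist, ← Finset.mul_sum]
        ring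
end
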